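/- arXiv:quant-ph/0605213 — 2 statements merged into one kernel-verified Lean document; each statement's English description precedes it below -/
import Mathlib

section
/- Let H_S and H_A be finite-dimensional complex Hilbert spaces, L_S a self-adjoint operator on H_S, L_A a self-adjoint operator on H_A, and Ψ0, Ψ1 unit vectors in H_S ⊗ H_A. Then for every PVM {E_α} on H_S and every PVM {P_j} on H_A, |⟨Ψ0, (L_S ⊗ 1 + 1 ⊗ L_A) Ψ1⟩| ≤ ‖L_S‖ Σ_j √( ⟨Ψ0, (1 ⊗ P_j) Ψ0⟩ · ⟨Ψ1, (1 ⊗ P_j) Ψ1⟩ ) + ‖L_A‖ Σ_α √( ⟨Ψ0, (E_α ⊗ 1) Ψ0⟩ · ⟨Ψ1, (E_α ⊗ 1) Ψ1⟩ ), where ‖·‖ is the operator norm. -/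
open Matrix Kronecker
open scoped ComplexOrder

-- Positive semidefinite square root (zero if not PSD).
open Classical in
noncomputable def psqrt {n : Type*} [Fintype n] [DecidableEq n] (A : Matrix n n ℂ) :
    Matrix n n ℂ :=
  if h : A.PosSemidef then
    (h.1.eigenvectorUnitary : Matrix n n ℂ) * diagonal ((↑) ∘ (√·) ∘ h.1.eigenvalues) *
      (star h.1.eigenvectorUnitary : Matrix n n ℂ)
  else 0

/-- Fidelity F(ρ0,ρ1) = tr √(√ρ0 ρ1 √ρ0). -/
noncomputable def fidelity {n : Type*} [Fintype n] [DecidableEq n] (ρ0 ρ1 : Matrix n n ℂ) : ℝ :=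
  (psqrt (psqrt ρ0 * ρ1 * psqrt ρ0)).trace.re

/-- Operator (ℓ²→ℓ²) norm of a matrix. -/
noncomputable def opNorm {n : Type*} [Fintype n] [DecidableEq n] (A : Matrix n n ℂ) : ℝ :=
  ‖LinearMap.toContinuousLinearMap (Matrix.toEuclideanLin A)‖

/-- Partial trace over the right (second) factor. -/
noncomputable def ptraceRight {m n : Type*} [Fintype m] [Fintype n]
    (ρ : Matrix (m × n) (m × n) ℂ) : Matrix m m ℂ :=
  Matrix.of fun i j => ∑ k, ρ (i, k) (j, k)

/-- Partial trace over the left (first) factor. -/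
noncomputable def ptraceLeft {m n : Type*} [Fintype m] [Fintype n]
    (ρ : Matrix (m × n) (m × n) ℂ) : Matrix n n ℂ :=
  Matrix.of fun i j => ∑ k, ρ (k, i) (k, j)

/-! Insert the resolution `1 = ∑ⱼ 1 ⊗ Pⱼ` into the `L_S ⊗ 1` term: each `Qⱼ = 1 ⊗ Pⱼ` is a
projection commuting with `L_S ⊗ 1`, so the matrix element splits as
`∑ⱼ ⟨Qⱼ Ψ0, (L_S ⊗ 1) Qⱼ Ψ1⟩`, and Cauchy–Schwarz bounds each summand by
`‖L_S‖ ‖Qⱼ Ψ0‖ ‖Qⱼ Ψ1‖ = ‖L_S‖ √(⟨Ψ0, Qⱼ Ψ0⟩ ⟨Ψ1, Qⱼ Ψ1⟩)`, using `‖L_S ⊗ 1‖ ≤ ‖L_S‖`.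
The `1 ⊗ L_A` term is handled in the same way with `E_α ⊗ 1`. -/

open WithLp

structure IsResolutionOfIdentity {A ι : Type*} [Semiring A] [Star A] [Fintype ι]
    (Q : ι → A) : Prop where
  isStarProjection : ∀ j, IsStarProjection (Q j)
  sum_eq_one : ∑ j, Q j = 1

section StarProjection

variable {R N ι m n : Type*} [CommRing R] [StarRing R] [Fintype N] [Fintype ι]
  [Fintype m] [Fintype n]

lemma IsStarProjection.star_dotProduct_mulVec_self {Q : Matrix N N R} (hQ : IsStarProjection Q)
    (v : N → R) : star v ⬝ᵥ (Q *ᵥ v) = star (Q *ᵥ v) ⬝ᵥ (Q *ᵥ v) := by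
  rw [star_mulVec, ← dotProduct_mulVec, mulVec_mulVec, ← star_eq_conjTranspose,
    hQ.isSelfAdjoint.star_eq, hQ.isIdempotentElem.eq]

lemma IsResolutionOfIdentity.star_dotProduct_mulVec_eq_sum [DecidableEq N]
    {Q : ι → Matrix N N R} (hQ : IsResolutionOfIdentity Q) {M : Matrix N N R}
    (hcomm : ∀ j, Commute (Q j) M) (u v : N → R) :
    star u ⬝ᵥ (M *ᵥ v) = ∑ j, star (Q j *ᵥ u) ⬝ᵥ (M *ᵥ (Q j *ᵥ v)) := by
  have hterm (j : ι) :
      star (Q j *ᵥ u) ⬝ᵥ (M *ᵥ (Q j *ᵥ v)) = star u ⬝ᵥ (Q j *ᵥ (M *ᵥ v)) := by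
    obtain ⟨hidem, hsa⟩ := hQ.isStarProjection j
    rw [star_mulVec, ← dotProduct_mulVec, ← star_eq_conjTranspose, hsa.star_eq, mulVec_mulVec,
      mulVec_mulVec, mulVec_mulVec, Matrix.mul_assoc, ← (hcomm j).eq, ← Matrix.mul_assoc,
      hidem.eq]
  simp_rw [hterm, ← dotProduct_sum, ← sum_mulVec, hQ.sum_eq_one, one_mulVec]

lemma IsStarProjection.one_kronecker [DecidableEq m] {P : Matrix n n R}
    (hP : IsStarProjection P) : IsStarProjection ((1 : Matrix m m R) ⊗ₖ P) where
  isIdempotentElem := by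
    rw [IsIdempotentElem, ← mul_kronecker_mul, Matrix.one_mul, hP.isIdempotentElem.eq]
  isSelfAdjoint := by
    rw [IsSelfAdjoint, star_eq_conjTranspose, conjTranspose_kronecker, conjTranspose_one,
      ← star_eq_conjTranspose, hP.isSelfAdjoint.star_eq]

lemma IsStarProjection.kronecker_one [DecidableEq n] {E : Matrix m m R}
    (hE : IsStarProjection E) : IsStarProjection (E ⊗ₖ (1 : Matrix n n R)) where
  isIdempotentElem := by
    rw [IsIdempotentElem, ← mul_kronecker_mul, Matrix.one_mul, hE.isIdempotentElem.eq]
  isSelfAdjoint := by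
    rw [IsSelfAdjoint, star_eq_conjTranspose, conjTranspose_kronecker, conjTranspose_one,
      ← star_eq_conjTranspose, hE.isSelfAdjoint.star_eq]

variable [DecidableEq m] [DecidableEq n]

lemma IsResolutionOfIdentity.one_kronecker {P : ι → Matrix n n R}
    (hP : IsResolutionOfIdentity P) :
    IsResolutionOfIdentity fun j => (1 : Matrix m m R) ⊗ₖ P j where
  isStarProjection j := (hP.isStarProjection j).one_kronecker
  sum_eq_one := by
    have h : (1 : Matrix m m R) ⊗ₖ ∑ j, P j = ∑ j, 1 ⊗ₖ P j :=
      map_sum (kroneckerBilinear (R := R) 1) P Finset.univ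
    rw [← h, hP.sum_eq_one, one_kronecker_one]

lemma IsResolutionOfIdentity.kronecker_one {E : ι → Matrix m m R}
    (hE : IsResolutionOfIdentity E) :
    IsResolutionOfIdentity fun α => E α ⊗ₖ (1 : Matrix n n R) where
  isStarProjection α := (hE.isStarProjection α).kronecker_one
  sum_eq_one := by
    have h : (∑ α, E α) ⊗ₖ (1 : Matrix n n R) = ∑ α, E α ⊗ₖ 1 :=
      map_sum ((kroneckerBilinear (R := R)).flip 1) E Finset.univ
    rw [← h, hE.sum_eq_one, one_kronecker_one]

end StarProjection

lemma commute_one_kronecker_kronecker_one {R m n : Type*} [CommSemiring R] [Fintype m]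
    [Fintype n] [DecidableEq m] [DecidableEq n] (A : Matrix m m R) (B : Matrix n n R) :
    Commute ((1 : Matrix m m R) ⊗ₖ B) (A ⊗ₖ (1 : Matrix n n R)) := by
  simp only [Commute, SemiconjBy, ← mul_kronecker_mul, Matrix.one_mul, Matrix.mul_one]

section OpNorm

variable {N : Type*} [Fintype N] [DecidableEq N]

lemma opNorm_nonneg (A : Matrix N N ℂ) : 0 ≤ opNorm A := norm_nonneg _

lemma norm_toLp_mulVec_le (A : Matrix N N ℂ) (v : N → ℂ) :
    ‖toLp 2 (A *ᵥ v)‖ ≤ opNorm A * ‖toLp 2 v‖ :=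
  (LinearMap.toContinuousLinearMap (toEuclideanLin A)).le_opNorm (toLp 2 v)

lemma opNorm_le_of_norm_mulVec_le (A : Matrix N N ℂ) {c : ℝ} (hc : 0 ≤ c)
    (h : ∀ v : N → ℂ, ‖toLp 2 (A *ᵥ v)‖ ≤ c * ‖toLp 2 v‖) : opNorm A ≤ c :=
  ContinuousLinearMap.opNorm_le_bound _ hc fun v => h (ofLp v)

lemma norm_star_dotProduct_mulVec_le (M : Matrix N N ℂ) (u v : N → ℂ) :
    ‖star u ⬝ᵥ (M *ᵥ v)‖ ≤ opNorm M * (‖toLp 2 u‖ * ‖toLp 2 v‖) := by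
  calc ‖star u ⬝ᵥ (M *ᵥ v)‖ = ‖inner ℂ (toLp 2 u) (toLp 2 (M *ᵥ v))‖ := by
        rw [EuclideanSpace.inner_toLp_toLp, dotProduct_comm]
    _ ≤ ‖toLp 2 u‖ * ‖toLp 2 (M *ᵥ v)‖ := norm_inner_le_norm _ _
    _ ≤ ‖toLp 2 u‖ * (opNorm M * ‖toLp 2 v‖) := by
        gcongr; exact norm_toLp_mulVec_le M v
    _ = opNorm M * (‖toLp 2 u‖ * ‖toLp 2 v‖) := by ring

omit [DecidableEq N] in
lemma re_star_dotProduct_self (w : N → ℂ) : (star w ⬝ᵥ w).re = ‖toLp 2 w‖ ^ 2 := by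
  rw [← inner_self_eq_norm_sq (𝕜 := ℂ), EuclideanSpace.inner_toLp_toLp, dotProduct_comm]
  rfl

theorem IsResolutionOfIdentity.norm_star_dotProduct_mulVec_le_sum_sqrt {ι : Type*} [Fintype ι]
    {Q : ι → Matrix N N ℂ} (hQ : IsResolutionOfIdentity Q) {M : Matrix N N ℂ}
    (hcomm : ∀ j, Commute (Q j) M) (u v : N → ℂ) :
    ‖star u ⬝ᵥ (M *ᵥ v)‖ ≤
      opNorm M * ∑ j, √((star u ⬝ᵥ (Q j *ᵥ u)).re * (star v ⬝ᵥ (Q j *ᵥ v)).re) := by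
  rw [hQ.star_dotProduct_mulVec_eq_sum hcomm, Finset.mul_sum]
  refine (norm_sum_le _ _).trans (Finset.sum_le_sum fun j _ => ?_)
  simp only [(hQ.isStarProjection j).star_dotProduct_mulVec_self, re_star_dotProduct_self]
  rw [← mul_pow, Real.sqrt_sq (by positivity)]
  exact norm_star_dotProduct_mulVec_le M _ _

end OpNorm

section Kronecker

variable {m n : Type*} [Fintype m] [Fintype n]

lemma kronecker_one_mulVec_apply [DecidableEq n] (A : Matrix m m ℂ) (v : m × n → ℂ) (i : m)
    (k : n) : ((A ⊗ₖ (1 : Matrix n n ℂ)) *ᵥ v) (i, k) = (A *ᵥ fun j => v (j, k)) i := by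
  simp only [mulVec, dotProduct, Fintype.sum_prod_type, kroneckerMap_apply, one_apply]
  rw [Finset.sum_comm]
  simp [mul_ite]

lemma one_kronecker_mulVec_apply [DecidableEq m] (A : Matrix n n ℂ) (v : m × n → ℂ) (i : m)
    (k : n) : (((1 : Matrix m m ℂ) ⊗ₖ A) *ᵥ v) (i, k) = (A *ᵥ fun l => v (i, l)) k := by
  simp only [mulVec, dotProduct, Fintype.sum_prod_type, kroneckerMap_apply, one_apply]
  rw [Finset.sum_eq_single i] <;> simp +contextual [eq_comm]

lemma norm_sq_toLp_eq_sum_rows (v : m × n → ℂ) :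
    ‖toLp 2 v‖ ^ 2 = ∑ i, ‖toLp 2 fun k => v (i, k)‖ ^ 2 := by
  simp only [EuclideanSpace.norm_sq_eq, Fintype.sum_prod_type]

lemma norm_sq_toLp_eq_sum_cols (v : m × n → ℂ) :
    ‖toLp 2 v‖ ^ 2 = ∑ k, ‖toLp 2 fun i => v (i, k)‖ ^ 2 := by
  simp only [EuclideanSpace.norm_sq_eq, Fintype.sum_prod_type_right]

variable [DecidableEq m] [DecidableEq n]

lemma opNorm_kronecker_one_le (A : Matrix m m ℂ) :
    opNorm (A ⊗ₖ (1 : Matrix n n ℂ)) ≤ opNorm A := by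
  refine opNorm_le_of_norm_mulVec_le _ (opNorm_nonneg A) fun v => ?_
  rw [← pow_le_pow_iff_left₀ (norm_nonneg _) (mul_nonneg (opNorm_nonneg A) (norm_nonneg _))
    two_ne_zero, mul_pow, norm_sq_toLp_eq_sum_cols, norm_sq_toLp_eq_sum_cols, Finset.mul_sum]
  simp_rw [kronecker_one_mulVec_apply, ← mul_pow]
  gcongr with k
  exact norm_toLp_mulVec_le A _

lemma opNorm_one_kronecker_le (A : Matrix n n ℂ) :
    opNorm ((1 : Matrix m m ℂ) ⊗ₖ A) ≤ opNorm A := by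
  refine opNorm_le_of_norm_mulVec_le _ (opNorm_nonneg A) fun v => ?_
  rw [← pow_le_pow_iff_left₀ (norm_nonneg _) (mul_nonneg (opNorm_nonneg A) (norm_nonneg _))
    two_ne_zero, mul_pow, norm_sq_toLp_eq_sum_rows, norm_sq_toLp_eq_sum_rows, Finset.mul_sum]
  simp_rw [one_kronecker_mulVec_apply, ← mul_pow]
  gcongr with i
  exact norm_toLp_mulVec_le A _

end Kronecker

theorem abs_inner_conserved_le_pvm_overlaps_general
    {m n : Type*} [Fintype m] [Fintype n] [DecidableEq m] [DecidableEq n]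
    (LS : Matrix m m ℂ)
    (LA : Matrix n n ℂ)
    (Ψ0 Ψ1 : m × n → ℂ)
    (kE : ℕ) (E : Fin kE → Matrix m m ℂ)
    (hEsa : ∀ α, (E α)ᴴ = E α) (hEidem : ∀ α, E α * E α = E α)
    (hEsum : ∑ α, E α = 1)
    (kP : ℕ) (P : Fin kP → Matrix n n ℂ)
    (hPsa : ∀ j, (P j)ᴴ = P j) (hPidem : ∀ j, P j * P j = P j)
    (hPsum : ∑ j, P j = 1) :
    ‖(star Ψ0 ⬝ᵥ ((LS ⊗ₖ (1 : Matrix n n ℂ) + (1 : Matrix m m ℂ) ⊗ₖ LA) *ᵥ Ψ1))‖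
      ≤ opNorm LS * ∑ j, Real.sqrt
            ((star Ψ0 ⬝ᵥ (((1 : Matrix m m ℂ) ⊗ₖ P j) *ᵥ Ψ0)).re *
             (star Ψ1 ⬝ᵥ (((1 : Matrix m m ℂ) ⊗ₖ P j) *ᵥ Ψ1)).re)
        + opNorm LA * ∑ α, Real.sqrt
            ((star Ψ0 ⬝ᵥ ((E α ⊗ₖ (1 : Matrix n n ℂ)) *ᵥ Ψ0)).re *
             (star Ψ1 ⬝ᵥ ((E α ⊗ₖ (1 : Matrix n n ℂ)) *ᵥ Ψ1)).re) := by
  have hP : IsResolutionOfIdentity fun j => (1 : Matrix m m ℂ) ⊗ₖ P j :=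
    IsResolutionOfIdentity.one_kronecker ⟨fun j => ⟨hPidem j, hPsa j⟩, hPsum⟩
  have hE : IsResolutionOfIdentity fun α => E α ⊗ₖ (1 : Matrix n n ℂ) :=
    IsResolutionOfIdentity.kronecker_one ⟨fun α => ⟨hEidem α, hEsa α⟩, hEsum⟩
  rw [add_mulVec, dotProduct_add]
  refine (norm_add_le _ _).trans (add_le_add ?_ ?_)
  · refine (hP.norm_star_dotProduct_mulVec_le_sum_sqrt
      (fun j => commute_one_kronecker_kronecker_one LS (P j)) Ψ0 Ψ1).trans ?_
    exact mul_le_mul_of_nonneg_right (opNorm_kronecker_one_le LS) (by positivity)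
  · refine (hE.norm_star_dotProduct_mulVec_le_sum_sqrt
      (fun α => (commute_one_kronecker_kronecker_one (E α) LA).symm) Ψ0 Ψ1).trans ?_
    exact mul_le_mul_of_nonneg_right (opNorm_one_kronecker_le LA) (by positivity)

/-- PVM decomposition bound for the matrix element of the additive quantity. -/
theorem abs_inner_conserved_le_pvm_overlaps
    {m n : Type*} [Fintype m] [Fintype n] [DecidableEq m] [DecidableEq n]
    (LS : Matrix m m ℂ) (hLS : LS.IsHermitian)
    (LA : Matrix n n ℂ) (hLA : LA.IsHermitian)
    (Ψ0 Ψ1 : m × n → ℂ) (hΨ0 : star Ψ0 ⬝ᵥ Ψ0 = 1) (hΨ1 : star Ψ1 ⬝ᵥ Ψ1 = 1)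
    (kE : ℕ) (E : Fin kE → Matrix m m ℂ)
    (hEsa : ∀ α, (E α)ᴴ = E α) (hEidem : ∀ α, E α * E α = E α)
    (hEorth : ∀ α β, α ≠ β → E α * E β = 0) (hEsum : ∑ α, E α = 1)
    (kP : ℕ) (P : Fin kP → Matrix n n ℂ)
    (hPsa : ∀ j, (P j)ᴴ = P j) (hPidem : ∀ j, P j * P j = P j)
    (hPorth : ∀ i j, i ≠ j → P i * P j = 0) (hPsum : ∑ j, P j = 1) :
    ‖(star Ψ0 ⬝ᵥ ((LS ⊗ₖ (1 : Matrix n n ℂ) + (1 : Matrix m m ℂ) ⊗ₖ LA) *ᵥ Ψ1))‖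
      ≤ opNorm LS * ∑ j, Real.sqrt
            ((star Ψ0 ⬝ᵥ (((1 : Matrix m m ℂ) ⊗ₖ P j) *ᵥ Ψ0)).re *
             (star Ψ1 ⬝ᵥ (((1 : Matrix m m ℂ) ⊗ₖ P j) *ᵥ Ψ1)).re)
        + opNorm LA * ∑ α, Real.sqrt
            ((star Ψ0 ⬝ᵥ ((E α ⊗ₖ (1 : Matrix n n ℂ)) *ᵥ Ψ0)).re *
             (star Ψ1 ⬝ᵥ ((E α ⊗ₖ (1 : Matrix n n ℂ)) *ᵥ Ψ1)).re) :=
  abs_inner_conserved_le_pvm_overlaps_general LS LA Ψ0 Ψ1 kE E hEsa hEidem hEsum kP P hPsa hPidem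
    hPsum
end

section
/- (Wigner–Araki–Yanase theorem on distinguishability, pure apparatus state version.) Let H_S and H_A be finite-dimensional complex Hilbert spaces, L_S a self-adjoint operator on H_S, L_A a self-adjoint operator on H_A, and let U be a unitary operator on H_S ⊗ H_A commuting with L_S ⊗ 1 + 1 ⊗ L_A. Let ψ0, ψ1 ∈ H_S be orthogonal unit vectors and Ω ∈ H_A a unit vector, and let ρ_i := U |ψ_i ⊗ Ω⟩⟨ψ_i ⊗ Ω| U* for i = 0, 1. Then |⟨ψ0, L_S ψ1⟩| ≤ ‖L_A‖ · F(ρ0^S, ρ1^S) + ‖L_S‖ · F(ρ0^A, ρ1^A), where ρ_i^S and ρ_i^A are the reduced density matrices of ρ_i on H_S and H_A respectively, F is the fidelity, and ‖·‖ the operator norm. -/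
open Matrix Kronecker
open scoped ComplexOrder

/-!
Since `U` commutes with `L = L_S ⊗ 1 + 1 ⊗ L_A` and `ψ0 ⊥ ψ1`, `⟨ψ0, L_S ψ1⟩ = ⟨Φ0, L Φ1⟩` with
`Φi = U (ψi ⊗ Ω)`. Writing `Φi = vec Xi`, the reduced states are Gram matrices `ρi = Ai Aiᴴ`
(`Ai = Xi` on `A`, `Ai = Xiᵀ` on `S`), and the `L_S`- and `L_A`-terms of `⟨Φ0, L Φ1⟩` are traces
`tr (Kᵀ A0ᴴ A1)` with `K = L_S`, resp. `K = L_A`. Polar decompositions `Ai = √ρi Wi`, `‖Wi‖ ≤ 1`,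
turn such a trace into `tr (Y M)` with `‖Y‖ ≤ ‖K‖` and `M = √ρ0 √ρ1`, and
`|tr (Y M)| ≤ ‖Y‖ tr √(M Mᴴ) = ‖Y‖ F(ρ0, ρ1)`.
-/

open scoped Matrix.Norms.L2Operator MatrixOrder

namespace Matrix

section L2OpNorm

variable {𝕜 : Type*} [RCLike 𝕜] {m n : Type*} [Fintype m] [Fintype n]

lemma norm_toLp_star (v : n → 𝕜) :
    ‖(EuclideanSpace.equiv n 𝕜).symm (star v)‖ = ‖(EuclideanSpace.equiv n 𝕜).symm v‖ := by
  simp [EuclideanSpace.norm_eq]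

variable [DecidableEq n]

lemma norm_apply_le_l2_opNorm (A : Matrix m n 𝕜) (i : m) (j : n) : ‖A i j‖ ≤ ‖A‖ :=
  calc ‖A i j‖ = ‖(EuclideanSpace.equiv m 𝕜).symm (A *ᵥ EuclideanSpace.single j 1) i‖ := by
        simp [mulVec_single]
    _ ≤ ‖(EuclideanSpace.equiv m 𝕜).symm (A *ᵥ EuclideanSpace.single j 1)‖ :=
        PiLp.norm_apply_le _ i
    _ ≤ ‖A‖ * ‖EuclideanSpace.single j (1 : 𝕜)‖ := A.l2_opNorm_mulVec _
    _ = ‖A‖ := by simp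

lemma l2_opNorm_transpose_le [DecidableEq m] (A : Matrix m n 𝕜) : ‖Aᵀ‖ ≤ ‖A‖ := by
  rw [l2_opNorm_def]
  refine ContinuousLinearMap.opNorm_le_bound _ (norm_nonneg A) fun x => ?_
  have hx : Aᵀ *ᵥ x.ofLp = star (Aᴴ *ᵥ star x.ofLp) := by
    rw [star_mulVec, star_star, conjTranspose_conjTranspose, mulVec_transpose]
  have := Aᴴ.l2_opNorm_mulVec ((EuclideanSpace.equiv m 𝕜).symm (star x.ofLp))
  rw [l2_opNorm_conjTranspose, norm_toLp_star, ← norm_toLp_star] at this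
  simp only [LinearEquiv.trans_apply, LinearMap.coe_toContinuousLinearMap', toLpLin_apply, hx]
  simpa using this

lemma PosSemidef.norm_trace_mul_le {N : Matrix n n 𝕜} (hN : N.PosSemidef) (S : Matrix n n 𝕜) :
    ‖(N * S).trace‖ ≤ ‖S‖ * RCLike.re N.trace := by
  set V : Matrix n n 𝕜 := (hN.1.eigenvectorUnitary : Matrix n n 𝕜)
  have hspectral : N = V * diagonal (RCLike.ofReal ∘ hN.1.eigenvalues) * star V := by
    simpa using hN.1.spectral_theorem
  have htr : (N * S).trace = ∑ i, (hN.1.eigenvalues i : 𝕜) * (star V * S * V) i i := by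
    conv_lhs => rw [hspectral]
    rw [Matrix.mul_assoc, trace_mul_cycle, trace_mul_comm, trace]
    simp [diagonal_mul]
  have hVSV : ‖star V * S * V‖ = ‖S‖ := by
    rw [CStarRing.norm_mul_coe_unitary, ← Unitary.coe_star, CStarRing.norm_coe_unitary_mul]
  rw [htr, hN.1.trace_eq_sum_eigenvalues, map_sum, Finset.mul_sum]
  refine (norm_sum_le _ _).trans (Finset.sum_le_sum fun i _ => ?_)
  rw [norm_mul, RCLike.norm_ofReal, abs_of_nonneg (hN.eigenvalues_nonneg i), RCLike.ofReal_re,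
    mul_comm]
  exact mul_le_mul_of_nonneg_right (hVSV ▸ norm_apply_le_l2_opNorm _ i i)
    (hN.eigenvalues_nonneg i)

end L2OpNorm

section Polar

variable {m n : Type*} [Fintype m] [Fintype n] [DecidableEq m]

lemma conjTranspose_cfc (f : ℝ → ℝ) (B : Matrix m m ℂ) : (cfc f B)ᴴ = cfc f B :=
  IsSelfAdjoint.star_eq (cfc_predicate f B)

lemma conjTranspose_sqrt (A : Matrix m m ℂ) : (CFC.sqrt A)ᴴ = CFC.sqrt A :=
  (CFC.sqrt_nonneg A).isSelfAdjoint

lemma re_trace_sqrt_nonneg (A : Matrix m m ℂ) : 0 ≤ (CFC.sqrt A).trace.re :=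
  (RCLike.nonneg_iff.mp (nonneg_iff_posSemidef.mp (CFC.sqrt_nonneg A)).trace_nonneg).1

lemma cfc_mul_mul_cfc (f g : ℝ → ℝ) {B : Matrix m m ℂ} (hB : IsSelfAdjoint B) :
    cfc f B * B * cfc g B = cfc (fun x => f x * x * g x) B := by
  have hc (h : ℝ → ℝ) : ContinuousOn h (spectrum ℝ B) := B.finite_real_spectrum.continuousOn h
  rw [cfc_mul _ _ B (hc _) (hc _), cfc_mul _ _ B (hc _) (hc _), cfc_id' ℝ B]

/- `(√x)⁻¹` vanishes for `x ≤ 0` (`√x = 0` and `0⁻¹ = 0`), so `cfc (fun x => (√x)⁻¹) (A * Aᴴ)` is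
the Moore–Penrose inverse of `√(A Aᴴ)`, and `cfc (fun x => √x * (√x)⁻¹) (A * Aᴴ)` is the projection
onto its range. -/
lemma norm_cfc_inv_sqrt_mul_le_one [DecidableEq n] (A : Matrix m n ℂ) :
    ‖cfc (fun x => (√x)⁻¹) (A * Aᴴ) * A‖ ≤ 1 := by
  set W := cfc (fun x => (√x)⁻¹) (A * Aᴴ) * A
  have hWW : W * Wᴴ = cfc (fun x => (√x)⁻¹ * x * (√x)⁻¹) (A * Aᴴ) := by
    rw [conjTranspose_mul, conjTranspose_cfc,
      ← cfc_mul_mul_cfc _ _ (isHermitian_mul_conjTranspose_self A)]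
    simp only [W, Matrix.mul_assoc]
  have hle : ‖W * Wᴴ‖ ≤ 1 := by
    refine hWW ▸ norm_cfc_le zero_le_one fun x _ => ?_
    rcases le_or_gt x 0 with hx | hx
    · simp [Real.sqrt_eq_zero'.mpr hx]
    · have : (√x)⁻¹ * x * (√x)⁻¹ = 1 := by
        field_simp
        rw [Real.sq_sqrt hx.le]
      simp [this]
  have := l2_opNorm_conjTranspose_mul_self Wᴴ
  rw [conjTranspose_conjTranspose, l2_opNorm_conjTranspose] at this
  nlinarith [norm_nonneg W]

lemma cfc_sqrt_mul_inv_sqrt_mul_self (A : Matrix m n ℂ) :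
    cfc (fun x => √x * (√x)⁻¹) (A * Aᴴ) * A = A := by
  have hB : 0 ≤ A * Aᴴ := nonneg_iff_posSemidef.mpr (posSemidef_self_mul_conjTranspose A)
  set q : ℝ → ℝ := fun x => 1 - √x * (√x)⁻¹
  have hq : cfc q (A * Aᴴ) * (A * Aᴴ) * cfc q (A * Aᴴ) = 0 := by
    rw [cfc_mul_mul_cfc _ _ hB.isSelfAdjoint, ← cfc_zero ℝ (A * Aᴴ)]
    refine cfc_congr fun x hx => ?_
    rcases (spectrum_nonneg_of_nonneg hB hx).eq_or_lt with rfl | hx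
    · simp
    · simp [q, mul_inv_cancel₀ (Real.sqrt_pos.mpr hx).ne']
  have hqA : cfc q (A * Aᴴ) * A = 0 := by
    rw [← self_mul_conjTranspose_eq_zero, conjTranspose_mul, conjTranspose_cfc]
    simpa only [Matrix.mul_assoc] using hq
  have hc (h : ℝ → ℝ) : ContinuousOn h (spectrum ℝ (A * Aᴴ)) :=
    (A * Aᴴ).finite_real_spectrum.continuousOn h
  rwa [cfc_sub _ _ _ (hc _) (hc _), cfc_const_one ℝ _, Matrix.sub_mul, Matrix.one_mul,
    sub_eq_zero, eq_comm] at hqA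

lemma exists_eq_sqrt_mul_conjTranspose_mul [DecidableEq n] (A : Matrix m n ℂ) :
    ∃ W : Matrix m n ℂ, ‖W‖ ≤ 1 ∧ A = CFC.sqrt (A * Aᴴ) * W := by
  have hB : 0 ≤ A * Aᴴ := nonneg_iff_posSemidef.mpr (posSemidef_self_mul_conjTranspose A)
  have hc (h : ℝ → ℝ) : ContinuousOn h (spectrum ℝ (A * Aᴴ)) :=
    (A * Aᴴ).finite_real_spectrum.continuousOn h
  refine ⟨_, norm_cfc_inv_sqrt_mul_le_one A, ?_⟩
  rw [CFC.sqrt_eq_real_sqrt _ hB, cfcₙ_eq_cfc, ← Matrix.mul_assoc, ← cfc_mul _ _ _ (hc _) (hc _),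
    cfc_sqrt_mul_inv_sqrt_mul_self]

lemma norm_trace_mul_le_re_trace_sqrt (Y M : Matrix m m ℂ) :
    ‖(Y * M).trace‖ ≤ ‖Y‖ * (CFC.sqrt (M * Mᴴ)).trace.re := by
  obtain ⟨W, hW, hM⟩ := exists_eq_sqrt_mul_conjTranspose_mul M
  have hYM : (Y * M).trace = (CFC.sqrt (M * Mᴴ) * (W * Y)).trace := by
    conv_lhs => rw [hM]
    rw [← Matrix.mul_assoc, trace_mul_comm, ← Matrix.mul_assoc, trace_mul_comm]
  calc ‖(Y * M).trace‖ ≤ ‖W * Y‖ * (CFC.sqrt (M * Mᴴ)).trace.re :=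
        hYM ▸ (nonneg_iff_posSemidef.mp (CFC.sqrt_nonneg _)).norm_trace_mul_le _
    _ ≤ ‖Y‖ * (CFC.sqrt (M * Mᴴ)).trace.re := by
        gcongr
        · exact re_trace_sqrt_nonneg _
        · exact (l2_opNorm_mul W Y).trans (mul_le_of_le_one_left (norm_nonneg Y) hW)

end Polar

section Kronecker

variable {R : Type*} [CommSemiring R] [StarRing R] {m n : Type*} [Fintype m] [Fintype n]

lemma star_mulVec_dotProduct_mulVec_mulVec (U M : Matrix m m R) (v w : m → R) :
    star (U *ᵥ v) ⬝ᵥ (M *ᵥ (U *ᵥ w)) = star v ⬝ᵥ ((Uᴴ * M * U) *ᵥ w) := by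
  rw [star_mulVec, mulVec_mulVec, ← dotProduct_mulVec, mulVec_mulVec, ← Matrix.mul_assoc]

lemma star_dotProduct_kronecker_mulVec_prod (B : Matrix m m R) (C : Matrix n n R)
    (a b : m → R) (c d : n → R) :
    star (fun p : m × n => a p.1 * c p.2) ⬝ᵥ ((B ⊗ₖ C) *ᵥ fun p : m × n => b p.1 * d p.2)
      = (star a ⬝ᵥ (B *ᵥ b)) * (star c ⬝ᵥ (C *ᵥ d)) := by
  have hmul : (B ⊗ₖ C) *ᵥ (fun p : m × n => b p.1 * d p.2)
      = fun p : m × n => (B *ᵥ b) p.1 * (C *ᵥ d) p.2 := by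
    ext p
    simp only [mulVec, dotProduct, kroneckerMap_apply, Fintype.sum_prod_type, Finset.sum_mul_sum,
      mul_mul_mul_comm]
  simp only [hmul, dotProduct, Fintype.sum_prod_type, Pi.star_apply, star_mul', Finset.sum_mul_sum,
    mul_mul_mul_comm]

lemma star_vec_dotProduct_kronecker_one_mulVec_vec [DecidableEq n] (B : Matrix m m R)
    (X0 X1 : Matrix n m R) :
    star (vec X0) ⬝ᵥ ((B ⊗ₖ (1 : Matrix n n R)) *ᵥ vec X1) = (Bᵀ * (X0ᴴ * X1)).trace := by
  rw [kronecker_mulVec_vec, star_vec_dotProduct_vec, Matrix.one_mul, ← Matrix.mul_assoc,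
    trace_mul_comm]

lemma star_vec_dotProduct_one_kronecker_mulVec_vec [DecidableEq m] (C : Matrix n n R)
    (X0 X1 : Matrix n m R) :
    star (vec X0) ⬝ᵥ (((1 : Matrix m m R) ⊗ₖ C) *ᵥ vec X1) = (Cᵀ * (X0ᵀᴴ * X1ᵀ)).trace := by
  rw [kronecker_mulVec_vec, star_vec_dotProduct_vec, transpose_one, Matrix.mul_one,
    ← trace_transpose, transpose_mul, transpose_mul, Matrix.mul_assoc, trace_mul_comm,
    Matrix.mul_assoc]
  rfl

end Kronecker

end Matrix

section Fidelity

variable {m n : Type*} [Fintype m] [Fintype n] [DecidableEq n]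

lemma Matrix.PosSemidef.psqrt_eq_sqrt {A : Matrix n n ℂ} (hA : A.PosSemidef) :
    psqrt A = CFC.sqrt A := by
  rw [CFC.sqrt_eq_real_sqrt A hA.nonneg, cfcₙ_eq_cfc, hA.1.cfc_eq, psqrt, dif_pos hA,
    IsHermitian.cfc, Unitary.conjStarAlgAut_apply]
  rfl

lemma fidelity_eq_re_trace_sqrt {ρ0 ρ1 : Matrix n n ℂ} (h0 : ρ0.PosSemidef) (h1 : ρ1.PosSemidef) :
    fidelity ρ0 ρ1
      = (CFC.sqrt ((CFC.sqrt ρ0 * CFC.sqrt ρ1) * (CFC.sqrt ρ0 * CFC.sqrt ρ1)ᴴ)).trace.re := by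
  have hM : (CFC.sqrt ρ0 * CFC.sqrt ρ1) * (CFC.sqrt ρ0 * CFC.sqrt ρ1)ᴴ
      = CFC.sqrt ρ0 * ρ1 * CFC.sqrt ρ0 := by
    rw [conjTranspose_mul, conjTranspose_sqrt, conjTranspose_sqrt, Matrix.mul_assoc,
      ← Matrix.mul_assoc (CFC.sqrt ρ1), CFC.sqrt_mul_sqrt_self ρ1 h1.nonneg, Matrix.mul_assoc]
  rw [fidelity, h0.psqrt_eq_sqrt, ← hM, (posSemidef_self_mul_conjTranspose _).psqrt_eq_sqrt]

lemma fidelity_nonneg {ρ0 ρ1 : Matrix n n ℂ} (h0 : ρ0.PosSemidef) (h1 : ρ1.PosSemidef) :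
    0 ≤ fidelity ρ0 ρ1 :=
  fidelity_eq_re_trace_sqrt h0 h1 ▸ re_trace_sqrt_nonneg _

lemma norm_trace_mul_conjTranspose_mul_le_fidelity [DecidableEq m] (A0 A1 : Matrix m n ℂ)
    (K : Matrix n n ℂ) : ‖(K * (A0ᴴ * A1)).trace‖ ≤ ‖K‖ * fidelity (A0 * A0ᴴ) (A1 * A1ᴴ) := by
  obtain ⟨W0, hW0, hA0⟩ := exists_eq_sqrt_mul_conjTranspose_mul A0
  obtain ⟨W1, hW1, hA1⟩ := exists_eq_sqrt_mul_conjTranspose_mul A1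
  set M := CFC.sqrt (A0 * A0ᴴ) * CFC.sqrt (A1 * A1ᴴ)
  have hK : (K * (A0ᴴ * A1)).trace = (W1 * K * W0ᴴ * M).trace := by
    conv_lhs => rw [hA0, hA1, conjTranspose_mul, conjTranspose_sqrt]
    rw [show K * (W0ᴴ * CFC.sqrt (A0 * A0ᴴ) * (CFC.sqrt (A1 * A1ᴴ) * W1)) = K * W0ᴴ * M * W1 by
      simp only [M, Matrix.mul_assoc], trace_mul_comm]
    simp only [Matrix.mul_assoc]
  have hWKW : ‖W1 * K * W0ᴴ‖ ≤ ‖K‖ :=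
    calc ‖W1 * K * W0ᴴ‖ ≤ ‖W1‖ * ‖K‖ * ‖W0ᴴ‖ :=
          (l2_opNorm_mul _ _).trans (by gcongr; exact l2_opNorm_mul _ _)
      _ ≤ 1 * ‖K‖ * 1 := by gcongr; rwa [l2_opNorm_conjTranspose]
      _ = ‖K‖ := by ring
  rw [hK, fidelity_eq_re_trace_sqrt (posSemidef_self_mul_conjTranspose A0)
    (posSemidef_self_mul_conjTranspose A1)]
  exact (norm_trace_mul_le_re_trace_sqrt _ M).trans
    (mul_le_mul_of_nonneg_right hWKW (re_trace_sqrt_nonneg _))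

end Fidelity

section PartialTrace

variable {m n : Type*} [Fintype m] [Fintype n]

lemma ptraceLeft_vecMulVec_vec (X : Matrix n m ℂ) :
    ptraceLeft (vecMulVec (vec X) (star (vec X))) = X * Xᴴ := by
  ext k l
  simp [ptraceLeft, vecMulVec_apply, mul_apply]

lemma ptraceRight_vecMulVec_vec (X : Matrix n m ℂ) :
    ptraceRight (vecMulVec (vec X) (star (vec X))) = Xᵀ * Xᵀᴴ := by
  ext i j
  simp [ptraceRight, vecMulVec_apply, mul_apply]

lemma norm_star_dotProduct_kronecker_add_mulVec_le [DecidableEq m] [DecidableEq n]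
    (LS : Matrix m m ℂ) (LA : Matrix n n ℂ) (Φ0 Φ1 : m × n → ℂ) :
    ‖star Φ0 ⬝ᵥ ((LS ⊗ₖ (1 : Matrix n n ℂ) + (1 : Matrix m m ℂ) ⊗ₖ LA) *ᵥ Φ1)‖
      ≤ ‖LA‖ * fidelity (ptraceRight (vecMulVec Φ0 (star Φ0)))
          (ptraceRight (vecMulVec Φ1 (star Φ1)))
        + ‖LS‖ * fidelity (ptraceLeft (vecMulVec Φ0 (star Φ0)))
          (ptraceLeft (vecMulVec Φ1 (star Φ1))) := by
  obtain ⟨X0, rfl⟩ := vec_bijective.surjective Φ0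
  obtain ⟨X1, rfl⟩ := vec_bijective.surjective Φ1
  rw [add_mulVec, dotProduct_add, star_vec_dotProduct_kronecker_one_mulVec_vec,
    star_vec_dotProduct_one_kronecker_mulVec_vec, ptraceLeft_vecMulVec_vec,
    ptraceLeft_vecMulVec_vec, ptraceRight_vecMulVec_vec, ptraceRight_vecMulVec_vec, add_comm]
  refine (norm_add_le _ _).trans (add_le_add ?_ ?_)
  · exact (norm_trace_mul_conjTranspose_mul_le_fidelity _ _ _).trans <|
      mul_le_mul_of_nonneg_right (l2_opNorm_transpose_le LA)
        (fidelity_nonneg (posSemidef_self_mul_conjTranspose _)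
          (posSemidef_self_mul_conjTranspose _))
  · exact (norm_trace_mul_conjTranspose_mul_le_fidelity _ _ _).trans <|
      mul_le_mul_of_nonneg_right (l2_opNorm_transpose_le LS)
        (fidelity_nonneg (posSemidef_self_mul_conjTranspose _)
          (posSemidef_self_mul_conjTranspose _))

end PartialTrace

theorem waY_distinguishability_pure_general
    {m n : Type*} [Fintype m] [Fintype n] [DecidableEq m] [DecidableEq n]
    (LS : Matrix m m ℂ)
    (LA : Matrix n n ℂ)
    (U : Matrix (m × n) (m × n) ℂ) (hU : Uᴴ * U = 1)
    (hcomm : U * (LS ⊗ₖ (1 : Matrix n n ℂ) + (1 : Matrix m m ℂ) ⊗ₖ LA)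
           = (LS ⊗ₖ (1 : Matrix n n ℂ) + (1 : Matrix m m ℂ) ⊗ₖ LA) * U)
    (ψ0 ψ1 : m → ℂ)
    (horth : star ψ0 ⬝ᵥ ψ1 = 0)
    (Ω : n → ℂ) (hΩ : star Ω ⬝ᵥ Ω = 1)
    (ρ0 ρ1 : Matrix (m × n) (m × n) ℂ)
    (hρ0 : ρ0 = U * vecMulVec (fun p : m × n => ψ0 p.1 * Ω p.2)
                    (star fun p : m × n => ψ0 p.1 * Ω p.2) * Uᴴ)
    (hρ1 : ρ1 = U * vecMulVec (fun p : m × n => ψ1 p.1 * Ω p.2)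
                    (star fun p : m × n => ψ1 p.1 * Ω p.2) * Uᴴ) :
    ‖star ψ0 ⬝ᵥ (LS *ᵥ ψ1)‖
      ≤ opNorm LA * fidelity (ptraceRight ρ0) (ptraceRight ρ1)
        + opNorm LS * fidelity (ptraceLeft ρ0) (ptraceLeft ρ1) := by
  set L := LS ⊗ₖ (1 : Matrix n n ℂ) + (1 : Matrix m m ℂ) ⊗ₖ LA
  have hUL : Uᴴ * L * U = L := by
    rw [Matrix.mul_assoc, ← hcomm, ← Matrix.mul_assoc, hU, Matrix.one_mul]
  have hevolve (v : m × n → ℂ) :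
      U * vecMulVec v (star v) * Uᴴ = vecMulVec (U *ᵥ v) (star (U *ᵥ v)) := by
    rw [mul_vecMulVec, vecMulVec_mul, star_mulVec]
  have hψ : star ψ0 ⬝ᵥ (LS *ᵥ ψ1) = star (U *ᵥ fun p : m × n => ψ0 p.1 * Ω p.2)
      ⬝ᵥ (L *ᵥ (U *ᵥ fun p : m × n => ψ1 p.1 * Ω p.2)) := by
    rw [star_mulVec_dotProduct_mulVec_mulVec, hUL, add_mulVec, dotProduct_add,
      star_dotProduct_kronecker_mulVec_prod, star_dotProduct_kronecker_mulVec_prod, one_mulVec,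
      one_mulVec, hΩ, horth, zero_mul, mul_one, add_zero]
  rw [hψ, hρ0, hρ1, hevolve, hevolve]
  exact norm_star_dotProduct_kronecker_add_mulVec_le LS LA _ _

/-- Wigner–Araki–Yanase theorem on distinguishability (pure apparatus state). -/
theorem waY_distinguishability_pure
    {m n : Type*} [Fintype m] [Fintype n] [DecidableEq m] [DecidableEq n]
    (LS : Matrix m m ℂ) (hLS : LS.IsHermitian)
    (LA : Matrix n n ℂ) (hLA : LA.IsHermitian)
    (U : Matrix (m × n) (m × n) ℂ) (hU : Uᴴ * U = 1) (hU' : U * Uᴴ = 1)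
    (hcomm : U * (LS ⊗ₖ (1 : Matrix n n ℂ) + (1 : Matrix m m ℂ) ⊗ₖ LA)
           = (LS ⊗ₖ (1 : Matrix n n ℂ) + (1 : Matrix m m ℂ) ⊗ₖ LA) * U)
    (ψ0 ψ1 : m → ℂ) (hψ0 : star ψ0 ⬝ᵥ ψ0 = 1) (hψ1 : star ψ1 ⬝ᵥ ψ1 = 1)
    (horth : star ψ0 ⬝ᵥ ψ1 = 0)
    (Ω : n → ℂ) (hΩ : star Ω ⬝ᵥ Ω = 1)
    (ρ0 ρ1 : Matrix (m × n) (m × n) ℂ)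
    (hρ0 : ρ0 = U * vecMulVec (fun p : m × n => ψ0 p.1 * Ω p.2)
                    (star fun p : m × n => ψ0 p.1 * Ω p.2) * Uᴴ)
    (hρ1 : ρ1 = U * vecMulVec (fun p : m × n => ψ1 p.1 * Ω p.2)
                    (star fun p : m × n => ψ1 p.1 * Ω p.2) * Uᴴ) :
    ‖star ψ0 ⬝ᵥ (LS *ᵥ ψ1)‖
      ≤ opNorm LA * fidelity (ptraceRight ρ0) (ptraceRight ρ1)
        + opNorm LS * fidelity (ptraceLeft ρ0) (ptraceLeft ρ1) :=
  waY_distinguishability_pure_general LS LA U hU hcomm ψ0 ψ1 horth Ω hΩ ρ0 ρ1 hρ0 hρ1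
end
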